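/- arXiv:1410.2501 — 2 statements merged into one kernel-verified Lean document; each statement's English description precedes it below -/
import Mathlib

section
/- In any protocol solving uniform consensus in the crash-failure model with t < n, K_i(∃correct(v)) — process i knowing that some correct process knows ∃v — is a necessary condition for process i deciding v. -/
attribute [local instance] Classical.propDecidable

/-- An adversary in the synchronous crash-failure model: an input vector of binary
initial values, a failure pattern given by the delivery relation `F` (`F m j i` means
the message sent by `j` at time `m` is delivered to `i` at time `m+1`, i.e. in round `m+1`),
and a crash round for each process (`⊤` meaning the process never crashes).
A process behaves correctly before its crashing round and sends nothing afterwards;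
during its crashing round it may send to an arbitrary subset. -/
structure Adversary (n : ℕ) where
  init : Fin n → Bool
  F : ℕ → Fin n → Fin n → Prop
  crash : Fin n → ℕ∞
  crash_pos : ∀ j, 1 ≤ crash j
  before_crash : ∀ (m : ℕ) (j i : Fin n), ((m + 1 : ℕ) : ℕ∞) < crash j → F m j i
  after_crash : ∀ (m : ℕ) (j i : Fin n), crash j < ((m + 1 : ℕ) : ℕ∞) → ¬ F m j i

namespace Adversary

variable {n : ℕ}

/-- A process is faulty if it crashes at some point. -/
def Faulty (A : Adversary n) (j : Fin n) : Prop := A.crash j ≠ ⊤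

/-- The number `f` of actual failures in the run determined by the adversary. -/
noncomputable def numFaults (A : Adversary n) : ℕ := {j | A.Faulty j}.ncard

/-- A process is active at time `m` if it has not crashed before time `m`. -/
def Active (A : Adversary n) (j : Fin n) (m : ℕ) : Prop := ((m : ℕ) : ℕ∞) < A.crash j

end Adversary

/-- `Seen A ⟨j,ℓ⟩ ⟨i,m⟩`: node `⟨j,ℓ⟩` is in the view (communication graph) of node
`⟨i,m⟩`, i.e. there is a message chain from `⟨j,ℓ⟩` to `⟨i,m⟩`. -/
inductive Seen {n : ℕ} (A : Adversary n) : Fin n × ℕ → Fin n × ℕ → Prop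
  | refl (p : Fin n × ℕ) : Seen A p p
  | self {p : Fin n × ℕ} {i : Fin n} {m : ℕ} : Seen A p (i, m) → Seen A p (i, m + 1)
  | step {p : Fin n × ℕ} {j i : Fin n} {m : ℕ} : Seen A p (j, m) → A.F m j i →
      Seen A p (i, m + 1)

open Adversary

/-- Two adversaries give process `i` the same view at time `m` in a full-information
protocol: the same nodes are seen, with the same initial values at seen time-0 nodes
and the same incoming edges at seen later nodes. -/
def sameView {n : ℕ} (A B : Adversary n) (i : Fin n) (m : ℕ) : Prop :=
  (∀ p, Seen A p (i, m) ↔ Seen B p (i, m)) ∧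
  (∀ j, Seen A (j, 0) (i, m) → A.init j = B.init j) ∧
  (∀ (k : ℕ) (j j' : Fin n), Seen A (j', k + 1) (i, m) → (A.F k j j' ↔ B.F k j j'))

/-- The local state of (active) process `i` at time `m` is the same under both
adversaries: `i` is active in both and has the same full-information view. -/
def sameLocal {n : ℕ} (A B : Adversary n) (i : Fin n) (m : ℕ) : Prop :=
  A.Active i m ∧ B.Active i m ∧ sameView A B i m

/-- The runs of the system are those generated by adversaries with at most `t` crashes. -/
def Valid {n : ℕ} (t : ℕ) (A : Adversary n) : Prop := A.numFaults ≤ t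

/-- Knowledge in the full-information protocol: `i` knows the fact `φ` at time `m`
iff `φ` holds at time `m` in every run (with at most `t` failures) in which `i` has
the same local state. -/
def Knows {n : ℕ} (t : ℕ) (φ : Adversary n → ℕ → Prop) (A : Adversary n) (i : Fin n)
    (m : ℕ) : Prop :=
  ∀ B : Adversary n, Valid t B → sameLocal A B i m → φ B m

/-- The fact `∃v`: some process has initial value `v`. -/
def existsVal {n : ℕ} (v : Bool) : Adversary n → ℕ → Prop := fun A _ => ∃ j, A.init j = v

/-- Node `⟨j',m'⟩` is revealed to `⟨i,m⟩`: either it is seen by `⟨i,m⟩`, or for some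
seen node `⟨i',m'⟩` the edge `(⟨j',m'-1⟩,⟨i',m'⟩)` is absent from `i`'s view
(proving that `j'` crashed before time `m'`). -/
def RevealedNode {n : ℕ} (A : Adversary n) (j' : Fin n) (m' : ℕ) (i : Fin n) (m : ℕ) :
    Prop :=
  Seen A (j', m') (i, m) ∨
  ∃ (i' : Fin n) (k : ℕ), m' = k + 1 ∧ Seen A (i', k + 1) (i, m) ∧ ¬ A.F k j' i'

/-- Time `k` is revealed to `⟨i,m⟩` if every node `⟨j',k⟩` is revealed to `⟨i,m⟩`. -/
def RevealedTime {n : ℕ} (A : Adversary n) (k : ℕ) (i : Fin n) (m : ℕ) : Prop :=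
  ∀ j', RevealedNode A j' k i m

/-- A hidden path w.r.t. `⟨i,m⟩`: for each `k ≤ m` a node `⟨j_k,k⟩` not revealed to `⟨i,m⟩`. -/
def HiddenPath {n : ℕ} (A : Adversary n) (i : Fin n) (m : ℕ) : Prop :=
  ∃ js : ℕ → Fin n, ∀ k ≤ m, ¬ RevealedNode A (js k) k i m

/-- `not-known(∃0)`: no process active at time `m` knows `∃0`. -/
def notKnown0 {n : ℕ} (t : ℕ) : Adversary n → ℕ → Prop :=
  fun A m => ∀ j, A.Active j m → ¬ Knows t (existsVal false) A j m

/-- A (full-information, deterministic) decision protocol, described by the decision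
status function: `P A i m = some v` iff by time `m` process `i` has decided `v`
in the run determined by adversary `A`. -/
abbrev ProtoDec (n : ℕ) : Type := Adversary n → Fin n → ℕ → Option Bool

/-- Sanity conditions making a decision-status function a protocol: decisions are
irrevocable, and (for active processes) depend only on the local state. -/
def IsProtocol {n : ℕ} (t : ℕ) (P : ProtoDec n) : Prop :=
  (∀ A i m v, P A i m = some v → P A i (m + 1) = some v) ∧
  (∀ A B i m, Valid t A → Valid t B → sameLocal A B i m → P A i m = P B i m)

/-- Process `i` performs the action `decide(v)` at time `m`: it is decided on `v`
at `m` and was undecided before. -/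
def DecidesAt {n : ℕ} (P : ProtoDec n) (A : Adversary n) (i : Fin n) (m : ℕ) (v : Bool) :
    Prop :=
  P A i m = some v ∧ ∀ k < m, P A i k = none

/-- Decision: every correct process eventually decides. -/
def Decision {n : ℕ} (t : ℕ) (P : ProtoDec n) : Prop :=
  ∀ A : Adversary n, Valid t A → ∀ i, ¬ A.Faulty i → ∃ m, P A i m ≠ none

/-- Validity: if all initial values are `v` then correct processes decide `v`. -/
def Validity {n : ℕ} (t : ℕ) (P : ProtoDec n) : Prop :=
  ∀ A : Adversary n, Valid t A → ∀ v : Bool, (∀ j, A.init j = v) →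
    ∀ i m w, ¬ A.Faulty i → P A i m = some w → w = v

/-- Agreement: all correct processes decide on the same value. -/
def Agreement {n : ℕ} (t : ℕ) (P : ProtoDec n) : Prop :=
  ∀ A : Adversary n, Valid t A → ∀ i j m m' v w, ¬ A.Faulty i → ¬ A.Faulty j →
    P A i m = some v → P A j m' = some w → v = w

def ConsensusSolves {n : ℕ} (t : ℕ) (P : ProtoDec n) : Prop :=
  Decision t P ∧ Validity t P ∧ Agreement t P

/-- Uniform Agreement: all processes that decide (faulty or not) decide the same value. -/
def UniformAgreement {n : ℕ} (t : ℕ) (P : ProtoDec n) : Prop :=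
  ∀ A : Adversary n, Valid t A → ∀ i j m m' v w,
    P A i m = some v → P A j m' = some w → v = w

def UniformConsensusSolves {n : ℕ} (t : ℕ) (P : ProtoDec n) : Prop :=
  Decision t P ∧ Validity t P ∧ UniformAgreement t P

/-- `Q` dominates `P`: for every adversary and process, if `i` has decided by time `m`
in `P` then `i` has decided by time `m` in `Q`. -/
def Dominates {n : ℕ} (t : ℕ) (Q P : ProtoDec n) : Prop :=
  ∀ A : Adversary n, Valid t A → ∀ i m, P A i m ≠ none → Q A i m ≠ none

def StrictlyDominates {n : ℕ} (t : ℕ) (Q P : ProtoDec n) : Prop :=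
  Dominates t Q P ∧ ¬ Dominates t P Q

/-- Turn a per-time decision rule into a decision-status function (the first decision
taken is kept forever). -/
def runDec (step : ℕ → Option Bool) : ℕ → Option Bool
  | 0 => step 0
  | m + 1 => (runDec step m).elim (step (m + 1)) some

/-- The protocol `P₀`: decide 0 as soon as `K_i ∃0` holds, otherwise decide 1 at time `t+1`. -/
noncomputable def P0 (n t : ℕ) : ProtoDec n := fun A i =>
  runDec fun m =>
    if Knows t (existsVal false) A i m then some false
    else if m = t + 1 then some true
    else none

/-- The unbeatable protocol `Opt₀`: decide 0 as soon as `K_i ∃0` holds, and decide 1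
as soon as `K_i not-known(∃0)` holds. -/
noncomputable def Opt0 (n t : ℕ) : ProtoDec n := fun A i =>
  runDec fun m =>
    if Knows t (existsVal false) A i m then some false
    else if Knows t (notKnown0 t) A i m then some true
    else none

/-- The number of processes with initial value `false` (0). -/
noncomputable def zeros {n : ℕ} (A : Adversary n) : ℕ :=
  (Finset.univ.filter fun j => A.init j = false).card

/-- The number of processes with initial value `true` (1). -/
noncomputable def ones {n : ℕ} (A : Adversary n) : ℕ :=
  (Finset.univ.filter fun j => A.init j = true).card

/-- The fact `Maj = 0`: at least `n/2` initial values are 0. -/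
def Maj0 (n : ℕ) : Adversary n → ℕ → Prop := fun A _ => n ≤ 2 * zeros A

/-- The fact `Maj = 1`: strictly more than `n/2` initial values are 1. -/
def Maj1 (n : ℕ) : Adversary n → ℕ → Prop := fun A _ => n < 2 * ones A

noncomputable def seenZeros {n : ℕ} (A : Adversary n) (i : Fin n) (m : ℕ) : ℕ :=
  (Finset.univ.filter fun j => Seen A (j, 0) (i, m) ∧ A.init j = false).card

noncomputable def seenOnes {n : ℕ} (A : Adversary n) (i : Fin n) (m : ℕ) : ℕ :=
  (Finset.univ.filter fun j => Seen A (j, 0) (i, m) ∧ A.init j = true).card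

/-- `Maj(vals(i,m))`: 0 if at least half of the initial values known to `i` at `m`
are 0, and 1 otherwise. -/
noncomputable def MajSeen {n : ℕ} (A : Adversary n) (i : Fin n) (m : ℕ) : Bool :=
  if seenOnes A i m ≤ seenZeros A i m then false else true

/-- The unbeatable majority consensus protocol `Opt_Maj`. -/
noncomputable def OptMaj (n t : ℕ) : ProtoDec n := fun A i =>
  runDec fun m =>
    if Knows t (Maj0 n) A i m then some false
    else if Knows t (Maj1 n) A i m then some true
    else if ∃ k ≤ m, RevealedTime A k i m then some (MajSeen A i m)
    else none

/-- The fact `∀1`: all initial values are 1. -/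
def all1 (n : ℕ) : Adversary n → ℕ → Prop := fun A _ => ∀ j, A.init j = true

/-- The sender set of `i` repeats at `⟨i,m⟩`: `i` hears from the same set of processes
in rounds `m-1` and `m` (only meaningful for `m ≥ 2`). -/
def senderSetRepeats {n : ℕ} (A : Adversary n) (i : Fin n) (m : ℕ) : Prop :=
  ∀ j, (A.F (m - 2) j i ↔ A.F (m - 1) j i)

/-- The protocol `P0_opt` of Halpern, Moses and Waarts. -/
noncomputable def P0opt (n t : ℕ) : ProtoDec n := fun A i =>
  runDec fun m =>
    if Knows t (existsVal false) A i m then some false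
    else if Knows t (all1 n) A i m ∨ (2 ≤ m ∧ senderSetRepeats A i m) then some true
    else none

/-- The fact `∃correct(v)`: some correct (never-failing) process knows `∃v`. -/
def ExistsCorrectKnows {n : ℕ} (t : ℕ) (v : Bool) : Adversary n → ℕ → Prop :=
  fun A m => ∃ j, ¬ A.Faulty j ∧ Knows t (existsVal v) A j m

/-- The number `d` of failures process `i` knows of at time `m`: the number of
processes `j ≠ i` from which `i` receives no message in round `m`. -/
noncomputable def knownFaults {n : ℕ} (A : Adversary n) (i : Fin n) : ℕ → ℕ
  | 0 => 0
  | m + 1 => (Finset.univ.filter fun j => j ≠ i ∧ ¬ A.F m j i).card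

/-- The protocol `u-P₀` for uniform consensus: decide 0 as soon as
`K_i ∃correct(0)` holds, otherwise decide 1 at time `t+1`. -/
noncomputable def uP0 (n t : ℕ) : ProtoDec n := fun A i =>
  runDec fun m =>
    if Knows t (ExistsCorrectKnows t false) A i m then some false
    else if m = t + 1 then some true
    else none

/-- The unbeatable uniform consensus protocol `u-Opt₀`. -/
noncomputable def uOpt0 (n t : ℕ) : ProtoDec n := fun A i =>
  runDec fun m =>
    if Knows t (ExistsCorrectKnows t false) A i m then some false
    else if ¬ Knows t (existsVal false) A i m ∧ ∃ k ≤ m, RevealedTime A k i m then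
      some true
    else none

/-- All decisions in the run `P[A]` are taken at or before time `m`. -/
def AllDecidedBy {n : ℕ} (P : ProtoDec n) (A : Adversary n) (m : ℕ) : Prop :=
  ∀ i k, P A i k ≠ none → P A i m ≠ none

/-- `Q` last-decider dominates `P`. -/
def LDDominates {n : ℕ} (t : ℕ) (Q P : ProtoDec n) : Prop :=
  ∀ A : Adversary n, Valid t A → ∀ m, AllDecidedBy P A m → AllDecidedBy Q A m

/-- A 0-chain for `⟨i,m⟩`: distinct processes `j₀,…,j_d = i` with `d ≤ m`, `j₀` having
initial value 0, and `j_k` receiving a message from `j_{k-1}` at time `k` (round `k`). -/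
def ZeroChain {n : ℕ} (A : Adversary n) (i : Fin n) (m : ℕ) : Prop :=
  ∃ d ≤ m, ∃ js : ℕ → Fin n, js d = i ∧
    (∀ k ≤ d, ∀ l ≤ d, js k = js l → k = l) ∧
    A.init (js 0) = false ∧
    ∀ k, 1 ≤ k → k ≤ d → A.F (k - 1) (js (k - 1)) (js k)

/-! If `i` decides `v` at `m` while some indistinguishable run `B` has no correct process
knowing `∃v`, let every process that knows `∃v` in `B` at time `m` (all of them faulty) crash
silently at `m`. Process `i` cannot tell the new run `C` from `B`, so it still decides `v`; but in
`C` no correct process ever sees an initial value `v`, so such a process cannot tell `C` from the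
run in which all inputs are `¬v`, where Validity forces it to decide `¬v`. Since `t < n` a
correct process exists, contradicting Uniform Agreement. -/

namespace Adversary

variable {n : ℕ}

lemma active_of_not_faulty {A : Adversary n} {j : Fin n} (h : ¬ A.Faulty j) (m : ℕ) :
    A.Active j m := by
  rw [Active, not_ne_iff.1 h]
  exact ENat.natCast_lt_top m

lemma exists_not_faulty_of_valid {t : ℕ} {A : Adversary n} (hA : Valid t A) (ht : t < n) :
    ∃ j, ¬ A.Faulty j := by
  by_contra! h
  have hall : A.numFaults = n := by
    rw [numFaults, show {j | A.Faulty j} = Set.univ from Set.eq_univ_of_forall h,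
      Set.ncard_univ, Nat.card_eq_fintype_card, Fintype.card_fin]
  exact absurd hA (by unfold Valid; omega)

/-- The adversary `B` in which the processes in `S` send nothing from time `m` on: they crash
in round `m + 1` at the latest, delivering no message in it. -/
noncomputable def silenceFrom (B : Adversary n) (S : Fin n → Prop) (m : ℕ) : Adversary n where
  init := B.init
  F k j i := B.F k j i ∧ (S j → k < m)
  crash j := if S j then min (B.crash j) ((m + 1 : ℕ) : ℕ∞) else B.crash j
  crash_pos j := by
    split_ifs
    · exact le_min (B.crash_pos j) (by exact_mod_cast Nat.le_add_left 1 m)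
    · exact B.crash_pos j
  before_crash k j i h := by
    split_ifs at h with hj
    · have hk : k + 1 < m + 1 := by exact_mod_cast (lt_min_iff.1 h).2
      exact ⟨B.before_crash k j i (lt_min_iff.1 h).1, fun _ => by omega⟩
    · exact ⟨B.before_crash k j i h, fun hj' => absurd hj' hj⟩
  after_crash k j i h hF := by
    split_ifs at h with hj
    · rcases min_lt_iff.1 h with h | h
      · exact B.after_crash k j i h hF.1
      · have hk : m + 1 < k + 1 := by exact_mod_cast h
        have := hF.2 hj
        omega
    · exact B.after_crash k j i h hF.1

section silenceFrom

variable {B : Adversary n} {S : Fin n → Prop} {m : ℕ}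

lemma silenceFrom_F_iff_of_lt {k : ℕ} (hk : k < m) (j i : Fin n) :
    (B.silenceFrom S m).F k j i ↔ B.F k j i :=
  ⟨And.left, fun h => ⟨h, fun _ => hk⟩⟩

lemma faulty_silenceFrom {j : Fin n} : (B.silenceFrom S m).Faulty j ↔ S j ∨ B.Faulty j := by
  by_cases hj : S j
  · simp only [Faulty, silenceFrom, hj, ↓reduceIte, true_or, iff_true]
    exact ne_top_of_le_ne_top (ENat.natCast_ne_top (m + 1)) (min_le_right _ _)
  · simp only [Faulty, silenceFrom, hj, ↓reduceIte, false_or]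

lemma valid_silenceFrom {t : ℕ} (hB : Valid t B) (hS : ∀ j, S j → B.Faulty j) :
    Valid t (B.silenceFrom S m) := by
  have hfaulty : {j | (B.silenceFrom S m).Faulty j} = {j | B.Faulty j} :=
    Set.ext fun j => faulty_silenceFrom.trans ⟨fun h => h.elim (hS j) id, Or.inr⟩
  rw [Valid, numFaults, hfaulty]
  exact hB

lemma active_silenceFrom {i : Fin n} (h : B.Active i m) : (B.silenceFrom S m).Active i m := by
  simp only [Active, silenceFrom]
  split_ifs
  · exact lt_min h (by exact_mod_cast Nat.lt_succ_self m)
  · exact h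

end silenceFrom

def withInit (C : Adversary n) (f : Fin n → Bool) : Adversary n := { C with init := f }

end Adversary

open Adversary

section Seen

variable {n : ℕ}

lemma Seen.time_le {A : Adversary n} {p q : Fin n × ℕ} (h : Seen A p q) : p.2 ≤ q.2 := by
  induction h with
  | refl => exact le_rfl
  | self _ ih => exact ih.trans (Nat.le_succ _)
  | step _ _ ih => exact ih.trans (Nat.le_succ _)

lemma Seen.mono_time {A : Adversary n} {p : Fin n × ℕ} {i : Fin n} {k k' : ℕ}
    (h : Seen A p (i, k)) (hk : k ≤ k') : Seen A p (i, k') := by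
  induction k', hk using Nat.le_induction with
  | base => exact h
  | succ _ _ ih => exact Seen.self ih

lemma Seen.of_F_imp_below {A B : Adversary n} {m : ℕ}
    (hF : ∀ k < m, ∀ j j', A.F k j j' → B.F k j j') {p q : Fin n × ℕ} (h : Seen A p q)
    (hq : q.2 ≤ m) : Seen B p q := by
  induction h with
  | refl => exact Seen.refl p
  | self _ ih => exact Seen.self (ih (by dsimp at hq; omega))
  | @step j i k _ hf ih =>
    exact Seen.step (ih (by dsimp at hq; omega)) (hF k (by dsimp at hq; omega) j i hf)

lemma seen_iff_of_F_iff_below {A B : Adversary n} {m : ℕ}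
    (hF : ∀ k < m, ∀ j j', A.F k j j' ↔ B.F k j j') {p q : Fin n × ℕ} (hq : q.2 ≤ m) :
    Seen A p q ↔ Seen B p q :=
  ⟨fun h => h.of_F_imp_below (fun k hk j j' => (hF k hk j j').1) hq,
    fun h => h.of_F_imp_below (fun k hk j j' => (hF k hk j j').2) hq⟩

/-- Silencing, from time `m` on, every process that has seen `p` by time `m` keeps `p` from
spreading any further than it had by time `m`. -/
lemma Seen.of_silenceFrom {B : Adversary n} {S : Fin n → Prop} {m : ℕ}
    {p q : Fin n × ℕ} (h : Seen (B.silenceFrom S m) p q) (hp : p.2 ≤ m)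
    (hS : ∀ j, Seen B p (j, m) → S j) : Seen B p (q.1, min q.2 m) := by
  induction h with
  | refl => simpa [min_eq_left hp] using Seen.refl p
  | self _ ih => exact ih.mono_time (by omega)
  | @step j i k _ hf ih =>
    have hk : k < m := hf.2 (hS j (ih.mono_time (min_le_right k m)))
    have hpath : Seen B p (i, k + 1) := Seen.step (by simpa [min_eq_left hk.le] using ih) hf.1
    simpa [min_eq_left (Nat.succ_le_of_lt hk)] using hpath

end Seen

section View

variable {n : ℕ}

lemma sameView.trans {A B C : Adversary n} {i : Fin n} {m : ℕ}
    (h₁ : sameView A B i m) (h₂ : sameView B C i m) : sameView A C i m :=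
  ⟨fun p => (h₁.1 p).trans (h₂.1 p),
    fun j hj => (h₁.2.1 j hj).trans (h₂.2.1 j ((h₁.1 _).1 hj)),
    fun k j j' hj => (h₁.2.2 k j j' hj).trans (h₂.2.2 k j j' ((h₁.1 _).1 hj))⟩

lemma sameView_of_F_iff_below {A B : Adversary n} {i : Fin n} {m : ℕ}
    (hF : ∀ k < m, ∀ j j', A.F k j j' ↔ B.F k j j')
    (hinit : ∀ j, Seen A (j, 0) (i, m) → A.init j = B.init j) : sameView A B i m :=
  ⟨fun _ => seen_iff_of_F_iff_below hF le_rfl, hinit,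
    fun k j j' hj => hF k (Nat.lt_of_succ_le hj.time_le) j j'⟩

lemma sameView_silenceFrom (B : Adversary n) (S : Fin n → Prop) (i : Fin n) (m : ℕ) :
    sameView B (B.silenceFrom S m) i m :=
  sameView_of_F_iff_below (fun _ hk j j' => (silenceFrom_F_iff_of_lt hk j j').symm)
    (fun _ _ => rfl)

lemma knows_existsVal_of_seen {t : ℕ} {A : Adversary n} {i j : Fin n} {m : ℕ} {v : Bool}
    (hs : Seen A (j, 0) (i, m)) (hv : A.init j = v) : Knows t (existsVal v) A i m :=
  fun _ _ hl => ⟨j, (hl.2.2.2.1 j hs).symm.trans hv⟩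

end View

lemma exists_decides_not_of_never_seen {n t : ℕ} {P : ProtoDec n} (hP : IsProtocol t P)
    (hD : Decision t P) (hV : Validity t P) {C : Adversary n} (hC : Valid t C) {j : Fin n}
    (hj : ¬ C.Faulty j) {v : Bool} (hblind : ∀ k j₀, Seen C (j₀, 0) (j, k) → C.init j₀ ≠ v) :
    ∃ k, P C j k = some !v := by
  set D := C.withInit fun _ => !v
  have hDvalid : Valid t D := hC
  obtain ⟨k, hk⟩ := hD D hDvalid j hj
  obtain ⟨w, hw⟩ := Option.ne_none_iff_exists'.1 hk
  have hCD : sameLocal C D j k :=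
    ⟨active_of_not_faulty hj k, active_of_not_faulty hj k,
      sameView_of_F_iff_below (fun _ _ _ _ => Iff.rfl)
        (fun j₀ hs => Bool.eq_not_iff.2 (hblind k j₀ hs))⟩
  refine ⟨k, ?_⟩
  rw [hP.2 C D j k hC hDvalid hCD, hw, hV D hDvalid (!v) (fun _ => rfl) j k w hj hw]

/-- In any protocol solving uniform consensus, `K_i ∃correct(v)` is a necessary
condition for process `i` deciding `v`. -/
theorem uniform_necessary_condition (n t : ℕ) (ht : t < n)
    (P : ProtoDec n) (hP : IsProtocol t P) (hU : UniformConsensusSolves t P) :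
    ∀ A : Adversary n, Valid t A → ∀ (i : Fin n) (m : ℕ) (v : Bool),
      A.Active i m → DecidesAt P A i m v →
      Knows t (ExistsCorrectKnows t v) A i m := by
  intro A hA i m v _ hDec B hB hAB
  by_contra hnone
  set S : Fin n → Prop := fun j => Knows t (existsVal v) B j m
  have hSfaulty : ∀ j, S j → B.Faulty j := fun j hj => by_contra fun hc => hnone ⟨j, hc, hj⟩
  set C := B.silenceFrom S m
  have hC : Valid t C := valid_silenceFrom hB hSfaulty
  have hAC : sameLocal A C i m :=
    ⟨hAB.1, active_silenceFrom hAB.2.1, hAB.2.2.trans (sameView_silenceFrom B S i m)⟩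
  have hiv : P C i m = some v := (hP.2 A C i m hA hC hAC) ▸ hDec.1
  obtain ⟨j, hj⟩ := exists_not_faulty_of_valid hC ht
  have hblind : ∀ k j₀, Seen C (j₀, 0) (j, k) → C.init j₀ ≠ v := fun k j₀ hs hv =>
    have hsB : Seen B (j₀, 0) (j, m) :=
      (Seen.of_silenceFrom hs (Nat.zero_le m) fun _ h => knows_existsVal_of_seen h hv)
        |>.mono_time (min_le_right k m)
    hj (faulty_silenceFrom.2 (Or.inl (knows_existsVal_of_seen hsB hv)))
  obtain ⟨k, hjv⟩ := exists_decides_not_of_never_seen hP hU.1 hU.2.1 hC hj hblind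
  simpa using hU.2.2 C hC i j m k v (!v) hiv hjv
end

section
/- Assume t > 0 and t < n. In any protocol Q solving uniform consensus in the crash-failure model, no process decides at time 0 in any run of Q. -/
attribute [local instance] Classical.propDecidable

open Adversary

/-! If `i` decided `v` at time 0, it would do so also in the run where it crashes in round 1
without sending anything while everybody else starts with `!v`: its time-0 view contains
only its own input. The other processes cannot tell this run from the one in which all inputs
are `!v`, where Validity and Decision force them to decide `!v`; a faulty `i` deciding `v`
then violates Uniform Agreement. -/

namespace Seen

variable {n : ℕ} {A B : Adversary n}

lemma eq_of_time_zero {p : Fin n × ℕ} {i : Fin n} (h : Seen A p (i, 0)) : p = (i, 0) := by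
  cases h; rfl

lemma mono (hF : ∀ m j i, A.F m j i → B.F m j i) {p q : Fin n × ℕ} (h : Seen A p q) :
    Seen B p q := by
  induction h with
  | refl => exact .refl _
  | self _ ih => exact .self ih
  | step _ hEdge ih => exact .step ih (hF _ _ _ hEdge)

lemma fst_eq_of_silent {i : Fin n} (hsilent : ∀ m i', ¬ A.F m i i') {p q : Fin n × ℕ}
    (h : Seen A p q) (hp : p.1 = i) : q.1 = i := by
  induction h with
  | refl => exact hp
  | self _ ih => exact ih
  | step _ hF ih =>
    obtain rfl : _ = i := ih
    exact absurd hF (hsilent _ _)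

end Seen

namespace Adversary

variable {n : ℕ}

lemma active_zero (A : Adversary n) (i : Fin n) : A.Active i 0 :=
  lt_of_lt_of_le zero_lt_one (A.crash_pos i)

@[simps init]
def silentCrash (i : Fin n) (ini : Fin n → Bool) : Adversary n where
  init := ini
  F := fun _ j _ => j ≠ i
  crash := fun j => if j = i then 1 else ⊤
  crash_pos := fun j => by split_ifs <;> simp
  before_crash := fun m j _ h hji => by
    simp [hji] at h
  after_crash := fun m j _ h => by
    split_ifs at h with hji
    · exact not_not.mpr hji
    · exact absurd h (not_lt.mpr le_top)

variable {i : Fin n} {ini : Fin n → Bool}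

lemma silentCrash_faulty_iff (j : Fin n) : (silentCrash i ini).Faulty j ↔ j = i := by
  by_cases hji : j = i <;> simp [Faulty, silentCrash, hji]

lemma silentCrash_active {j : Fin n} (hj : j ≠ i) (m : ℕ) : (silentCrash i ini).Active j m := by
  simp [Active, silentCrash, hj]

lemma valid_silentCrash {t : ℕ} (ht : 0 < t) : Valid t (silentCrash i ini) := by
  have hfaulty : {j | (silentCrash i ini).Faulty j} = {i} := by
    ext j; simp [silentCrash_faulty_iff]
  simpa [Valid, numFaults, hfaulty] using Nat.one_le_of_lt ht

end Adversary

open Adversary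

section

variable {n : ℕ}

lemma sameLocal_zero_of_init_eq {A B : Adversary n} {i : Fin n} (h : A.init i = B.init i) :
    sameLocal A B i 0 := by
  refine ⟨A.active_zero i, B.active_zero i, fun p => ?_, fun j hj => ?_, fun k j j' hj => ?_⟩
  · exact ⟨fun hp => hp.eq_of_time_zero ▸ .refl _, fun hp => hp.eq_of_time_zero ▸ .refl _⟩
  · cases hj.eq_of_time_zero
    exact h
  · cases hj.eq_of_time_zero

lemma sameLocal_of_silent {A B : Adversary n} {i j : Fin n} {m : ℕ} (hF : A.F = B.F)
    (hsilent : ∀ m i', ¬ A.F m i i') (hinit : ∀ k, k ≠ i → A.init k = B.init k) (hj : j ≠ i)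
    (hA : A.Active j m) (hB : B.Active j m) : sameLocal A B j m := by
  refine ⟨hA, hB, fun p => ⟨Seen.mono fun _ _ _ h => hF ▸ h, Seen.mono fun _ _ _ h => hF ▸ h⟩,
    fun k hk => hinit k fun hki => hj ?_, fun k j₁ j₂ _ => hF ▸ Iff.rfl⟩
  exact Seen.fst_eq_of_silent hsilent hk hki

lemma silentCrash_sameLocal {i j : Fin n} (hj : j ≠ i) {ini ini' : Fin n → Bool}
    (hini : ∀ k, k ≠ i → ini k = ini' k) (m : ℕ) :
    sameLocal (silentCrash i ini) (silentCrash i ini') j m :=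
  sameLocal_of_silent rfl (fun _ _ h => h rfl) hini hj (silentCrash_active hj m)
    (silentCrash_active hj m)

lemma exists_decides_silentCrash {t : ℕ} (ht : 0 < t) {Q : ProtoDec n} (hQ : IsProtocol t Q)
    (hDec : Decision t Q) (hVal : Validity t Q) {i j : Fin n} (hj : j ≠ i)
    {ini : Fin n → Bool} {w : Bool} (hini : ∀ k, k ≠ i → ini k = w) :
    ∃ m, Q (silentCrash i ini) j m = some w := by
  have hfaulty : ¬ (silentCrash i fun _ => w).Faulty j := (silentCrash_faulty_iff j).not.mpr hj
  obtain ⟨m, hm⟩ := hDec _ (valid_silentCrash ht) j hfaulty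
  obtain ⟨w', hw'⟩ := Option.ne_none_iff_exists'.mp hm
  have hw : w' = w := hVal _ (valid_silentCrash ht) w (fun _ => rfl) j m w' hfaulty hw'
  refine ⟨m, ?_⟩
  rw [hQ.2 _ _ j m (valid_silentCrash ht) (valid_silentCrash ht) (silentCrash_sameLocal hj hini m),
    hw', hw]

end

/-- If `0 < t < n`, then in any protocol solving uniform consensus no process decides
at time 0 in any run. -/
theorem uniform_no_decision_at_zero (n t : ℕ) (h0 : 0 < t) (ht : t < n)
    (Q : ProtoDec n) (hQ : IsProtocol t Q) (hU : UniformConsensusSolves t Q) :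
    ∀ A : Adversary n, Valid t A → ∀ i : Fin n, Q A i 0 = none := by
  intro A hA i
  obtain ⟨hDec, hVal, hAgree⟩ := hU
  by_contra hne
  obtain ⟨v, hv⟩ := Option.ne_none_iff_exists'.mp hne
  have : Nontrivial (Fin n) := Fin.nontrivial_iff_two_le.mpr (by omega)
  obtain ⟨j, hj⟩ := exists_ne i
  set ini := Function.update (fun _ => !v) i (A.init i)
  have hBi : Q (silentCrash i ini) i 0 = some v := by
    rw [← hQ.2 A _ i 0 hA (valid_silentCrash h0) (sameLocal_zero_of_init_eq (by simp [ini])), hv]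
  obtain ⟨m, hBj⟩ := exists_decides_silentCrash (ini := ini) (w := !v) h0 hQ hDec hVal hj
    fun k hk => by simp [ini, hk]
  simpa using hAgree _ (valid_silentCrash h0) i j 0 m v (!v) hBi hBj
end
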